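/- Let L be a nonempty level datum whose largest level k₀ satisfies 1 < k₀ < 2, let ρ := Ram(L) and σ := k₀·ρ ∈ ℤ (so ρ < σ < 2ρ). Then: (a) for every element k of L other than the largest one, the rescaled rational (ρ/(σ−ρ))·k is not an integer; (b) the set L′ := {(ρ/(σ−ρ))·k : k ∈ L} with its integer elements removed (at most the rescaled largest level (σ/(σ−ρ)) can be an integer) is again a level datum; and (c) Ram(L′) = σ − ρ, which is strictly smaller than ρ = Ram(L). -/

import Mathlib

open Finset

/-- The ramification order of a level datum: the least common denominator of its
elements, i.e. the lcm of the denominators (`ram ∅ = 1`). -/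
def ram (L : Finset ℚ) : ℕ := L.lcm Rat.den

/-- The least common denominator `d` of the "initial segment" of `L` consisting of the
elements `≥ k` (the elements come in decreasing order `k₀ > k₁ > ⋯`). -/
def segLcm (L : Finset ℚ) (k : ℚ) : ℕ := (L.filter (fun x => k ≤ x)).lcm Rat.den

/-- A level datum: a finite set of positive rationals such that the least common
denominators `d₀, d₁, …` of the initial segments (for the decreasing order) are all `≥ 2`
and form a strictly increasing sequence.  (Since the `d_j` are increasing, requiring
`d_j ≥ 2` for all `j` is equivalent to `d₀ ≥ 2`, i.e. to the largest element not being
an integer.) -/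
def IsLevelDatum (L : Finset ℚ) : Prop :=
  (∀ k ∈ L, 0 < k) ∧
  (∀ k ∈ L, 2 ≤ segLcm L k) ∧
  (∀ k ∈ L, ∀ k' ∈ L, k' < k → segLcm L k < segLcm L k')

/-- The largest level of `L` (junk value `0` for `L = ∅`). -/
def maxLevel (L : Finset ℚ) : ℚ := WithBot.unbotD 0 L.max

/-- The numerator `s(k) := k · Ram(L) ∈ ℤ` of a level `k` of `L`. -/
def numer (L : Finset ℚ) (k : ℚ) : ℤ := (k * (ram L : ℚ)).num

/-- `σ := k₀ · Ram(L) ∈ ℤ`, the numerator of the largest level. -/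
def sigma0 (L : Finset ℚ) : ℤ := numer L (maxLevel L)

/-- `gcd(s(x) for x ∈ s, Ram L)` : the gcd of `Ram L` together with the numerators of the
elements of a subset `s ⊆ L`. -/
def gSeg (L : Finset ℚ) (s : Finset ℚ) : ℕ :=
  Nat.gcd (ram L) (s.gcd (fun x => (numer L x).natAbs))

/-- The quantity
`B_L = (r − (s₀,r))·s₀ + Σᵢ ((s₀,…,s_{i−1},r) − (s₀,…,s_i,r))·s_i − r² + 1`
(`B_∅ = 0`), equal to the dimension of the elementary wild character variety. -/
def B (L : Finset ℚ) : ℤ :=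
  (∑ k ∈ L, ((gSeg L (L.filter (fun x => k < x)) : ℤ)
      - (gSeg L (L.filter (fun x => k ≤ x)) : ℤ)) * numer L k)
    - (ram L : ℤ) ^ 2 + 1

/-- A level datum is locally minimal at infinity if it is empty, or its largest level is
`< 1` or `> 2`. -/
def LocallyMinimal (L : Finset ℚ) : Prop :=
  L = ∅ ∨ maxLevel L < 1 ∨ 2 < maxLevel L

/-- Rescaling of a level datum by a factor `c`, removing the integer elements. -/
def rescale (L : Finset ℚ) (c : ℚ) : Finset ℚ :=
  (L.image (fun k => c * k)).filter (fun x => x.den ≠ 1)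

/-- The local simplification map `S_∞` on level data: if the largest level `k₀` satisfies
`1 < k₀ < 2`, rescale all the levels by `ρ/(σ−ρ)` (where `ρ = Ram L`, `σ = k₀·ρ`) and
remove the integer levels; otherwise do nothing. -/
def Sinf (L : Finset ℚ) : Finset ℚ :=
  if 1 < maxLevel L ∧ maxLevel L < 2 then
    rescale L ((ram L : ℚ) / ((sigma0 L : ℚ) - (ram L : ℚ)))
  else L

/-! With `ρ = Ram L` and `s(k) = k ρ ∈ ℤ`, each level has denominator `ρ / gcd(ρ, s(k))`, so the
least common denominator of the levels `≥ k` is `ρ / Γ(k)` with `Γ(k) = gcd(ρ, s(x) : x ≥ k)`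
(`gSeg`). With `n = σ - ρ` the rescaled level `ρ k / n` is `s(k) / n`, so the same computation
gives `n / gcd(n, s(x) : x ≥ k)` for the rescaled segments; since every segment contains `k₀` and
`σ - n = ρ`, this is `n / Γ(k)`. Discarding integers does not change an lcm of denominators, so
the strictly increasing sequence `ρ / Γ` becomes the strictly increasing sequence `n / Γ`, and the
new ramification order is `n / Γ(L) = n`, as `ρ / Γ(L) = ρ`. If a lower level `k` became an
integer, then `n ∣ s(k)`, and as `Γ` of the next level divides `n`, `Γ` would not change at `k`:
the segment lcms would not increase there. -/

theorem Nat.lcm_div_div_eq_div_gcd {N a b : ℕ} (hN : N ≠ 0) (ha : a ∣ N) (hb : b ∣ N) :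
    Nat.lcm (N / a) (N / b) = N / Nat.gcd a b := by
  have hg : Nat.gcd a b ∣ N := (Nat.gcd_dvd_left a b).trans ha
  have hg0 : 0 < Nat.gcd a b := Nat.pos_of_ne_zero fun h => hN (Nat.eq_zero_of_zero_dvd (h ▸ hg))
  refine Nat.dvd_antisymm (Nat.lcm_dvd (Nat.div_dvd_div_left ha (Nat.gcd_dvd_left a b))
    (Nat.div_dvd_div_left hb (Nat.gcd_dvd_right a b))) ((Nat.div_dvd_iff_dvd_mul hg hg0).2 ?_)
  rw [← Nat.gcd_mul_right]
  refine Nat.dvd_gcd ?_ ?_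
  · simpa only [Nat.mul_div_cancel' ha] using
      Nat.mul_dvd_mul_left a (Nat.dvd_lcm_left (N / a) (N / b))
  · simpa only [Nat.mul_div_cancel' hb] using
      Nat.mul_dvd_mul_left b (Nat.dvd_lcm_right (N / a) (N / b))

theorem Finset.lcm_div_gcd_eq_div_gcd {ι : Type*} [DecidableEq ι] (s : Finset ι) (f : ι → ℕ)
    {N : ℕ} (hN : N ≠ 0) :
    s.lcm (fun i => N / Nat.gcd N (f i)) = N / Nat.gcd N (s.gcd f) := by
  induction s using Finset.induction with
  | empty => simp [Nat.div_self (Nat.pos_of_ne_zero hN)]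
  | insert i s _ ih =>
    rw [Finset.lcm_insert, Finset.gcd_insert, ih]
    change Nat.lcm _ _ = _
    rw [Nat.lcm_div_div_eq_div_gcd hN (Nat.gcd_dvd_left _ _) (Nat.gcd_dvd_left _ _)]
    change _ = N / Nat.gcd N (Nat.gcd (f i) (s.gcd f))
    ac_rfl

theorem Rat.den_intCast_div_natCast (a : ℤ) {N : ℕ} (hN : N ≠ 0) :
    ((a : ℚ) / N).den = N / Nat.gcd N a.natAbs := by
  rw [show ((N : ℚ)) = ((N : ℤ) : ℚ) by norm_cast, Rat.intCast_div_eq_divInt, Rat.den_divInt,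
    if_neg (by exact_mod_cast hN)]
  rfl

theorem Rat.intCast_num_mul_of_den_dvd {q : ℚ} {N : ℕ} (h : q.den ∣ N) :
    ((q * N).num : ℚ) = q * N := by
  obtain ⟨m, rfl⟩ := h
  have hq : q * ((q.den * m : ℕ) : ℚ) = ((q.num * m : ℤ) : ℚ) := by
    push_cast
    rw [← mul_assoc, Rat.mul_den_eq_num]
  rw [hq, Rat.num_intCast]

theorem Finset.lcm_den_filter_den_ne_one (s : Finset ℚ) :
    (s.filter (fun x => x.den ≠ 1)).lcm Rat.den = s.lcm Rat.den := by
  refine Nat.dvd_antisymm (lcm_mono (filter_subset _ _)) (Finset.lcm_dvd fun x hx => ?_)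
  by_cases hx1 : x.den = 1
  · rw [hx1]
    exact one_dvd _
  · exact Finset.dvd_lcm (Finset.mem_filter.2 ⟨hx, hx1⟩)

theorem two_le_segLcm {M : Finset ℚ} {y : ℚ} (hy : y ∈ M) (hy1 : y.den ≠ 1) :
    2 ≤ segLcm M y := by
  have hdvd : y.den ∣ segLcm M y := Finset.dvd_lcm (Finset.mem_filter.2 ⟨hy, le_rfl⟩)
  have hne : segLcm M y ≠ 0 := by
    simp only [segLcm, ne_eq, Finset.lcm_eq_zero_iff, Rat.den_ne_zero, and_false, exists_false,
      not_false_eq_true]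
  have := y.pos
  have := Nat.le_of_dvd (Nat.pos_of_ne_zero hne) hdvd
  omega

section Rescale

variable {L : Finset ℚ} {c : ℚ}

theorem filter_le_rescale (hc : 0 < c) (k : ℚ) :
    (rescale L c).filter (fun y => c * k ≤ y)
      = ((L.filter (fun x => k ≤ x)).image (fun x => c * x)).filter (fun y => y.den ≠ 1) := by
  ext y
  simp only [rescale, Finset.mem_filter, Finset.mem_image]
  constructor
  · rintro ⟨⟨⟨x, hx, rfl⟩, hden⟩, hle⟩
    exact ⟨⟨x, ⟨hx, (mul_le_mul_iff_right₀ hc).1 hle⟩, rfl⟩, hden⟩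
  · rintro ⟨⟨x, ⟨hx, hle⟩, rfl⟩, hden⟩
    exact ⟨⟨⟨x, hx, rfl⟩, hden⟩, (mul_le_mul_iff_right₀ hc).2 hle⟩

theorem segLcm_rescale_mul (hc : 0 < c) (k : ℚ) :
    segLcm (rescale L c) (c * k)
      = ((L.filter (fun x => k ≤ x)).image (fun x => c * x)).lcm Rat.den := by
  rw [segLcm, filter_le_rescale hc, Finset.lcm_den_filter_den_ne_one]

theorem ram_rescale : ram (rescale L c) = (L.image (fun x => c * x)).lcm Rat.den :=
  Finset.lcm_den_filter_den_ne_one _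

end Rescale

section LevelDatum

variable {L : Finset ℚ}

theorem ram_ne_zero : ram L ≠ 0 := by
  simp only [ram, ne_eq, Finset.lcm_eq_zero_iff, Rat.den_ne_zero, and_false, exists_false,
    not_false_eq_true]

theorem numer_cast {k : ℚ} (hk : k ∈ L) : (numer L k : ℚ) = k * ram L :=
  Rat.intCast_num_mul_of_den_dvd (Finset.dvd_lcm hk)

theorem den_mul_ram_div {k : ℚ} (hk : k ∈ L) {N : ℕ} (hN : N ≠ 0) :
    (k * ram L / N).den = N / Nat.gcd N (numer L k).natAbs := by
  rw [← numer_cast hk, Rat.den_intCast_div_natCast _ hN]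

theorem lcm_den_mul_ram_div {s : Finset ℚ} (hs : s ⊆ L) {N : ℕ} (hN : N ≠ 0) :
    s.lcm (fun k => (k * ram L / N).den) = N / Nat.gcd N (s.gcd fun k => (numer L k).natAbs) := by
  rw [Finset.lcm_congr rfl fun k hk => den_mul_ram_div (hs hk) hN]
  exact Finset.lcm_div_gcd_eq_div_gcd s _ hN

theorem lcm_den_eq_ram_div_gSeg {s : Finset ℚ} (hs : s ⊆ L) :
    s.lcm Rat.den = ram L / gSeg L s := by
  have hρ : (ram L : ℚ) ≠ 0 := by exact_mod_cast ram_ne_zero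
  have h := lcm_den_mul_ram_div hs (ram_ne_zero (L := L))
  simp only [mul_div_cancel_right₀ _ hρ] at h
  exact h

theorem segLcm_eq_ram_div_gSeg (k : ℚ) :
    segLcm L k = ram L / gSeg L (L.filter fun x => k ≤ x) :=
  lcm_den_eq_ram_div_gSeg (Finset.filter_subset _ _)

theorem gSeg_self : gSeg L L = 1 := by
  have h := lcm_den_eq_ram_div_gSeg (subset_refl L)
  exact (Nat.div_eq_self.1 h.symm).resolve_left ram_ne_zero

theorem gSeg_dvd_gSeg {s t : Finset ℚ} (h : s ⊆ t) : gSeg L t ∣ gSeg L s :=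
  Nat.gcd_dvd_gcd_of_dvd_right _ (Finset.gcd_mono h)

theorem gSeg_insert_of_dvd {s : Finset ℚ} {k : ℚ} (h : gSeg L s ∣ (numer L k).natAbs) :
    gSeg L (insert k s) = gSeg L s := by
  rw [gSeg, Finset.gcd_insert]
  change Nat.gcd _ (Nat.gcd _ _) = _
  rw [Nat.gcd_comm (numer L k).natAbs, ← Nat.gcd_assoc]
  exact Nat.gcd_eq_left h

theorem maxLevel_eq_max' (hne : L.Nonempty) : maxLevel L = L.max' hne := by
  rw [maxLevel, ← Finset.coe_max' hne]
  rfl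

theorem maxLevel_mem (hne : L.Nonempty) : maxLevel L ∈ L :=
  maxLevel_eq_max' hne ▸ L.max'_mem hne

theorem le_maxLevel {k : ℚ} (hk : k ∈ L) : k ≤ maxLevel L :=
  maxLevel_eq_max' ⟨k, hk⟩ ▸ L.le_max' k hk

theorem sigma0_cast (hne : L.Nonempty) : (sigma0 L : ℚ) = maxLevel L * ram L :=
  numer_cast (maxLevel_mem hne)

theorem gcd_sub_ram_eq_gSeg {n : ℕ} (hn : (n : ℤ) = sigma0 L - ram L) {s : Finset ℚ}
    (hs : maxLevel L ∈ s) :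
    Nat.gcd n (s.gcd fun k => (numer L k).natAbs) = gSeg L s := by
  set g := s.gcd fun k => (numer L k).natAbs
  obtain ⟨t, ht⟩ : (g : ℤ) ∣ sigma0 L := Int.ofNat_dvd_left.2 (Finset.gcd_dvd hs)
  rw [gSeg, Nat.gcd_comm, ← Int.gcd_natCast_natCast, hn, ht, Nat.gcd_comm,
    ← Int.gcd_natCast_natCast, mul_comm, ← Int.gcd_neg, neg_sub]
  exact Int.gcd_sub_mul_right_right _ _ _

theorem gSeg_dvd_of_maxLevel_mem {n : ℕ} (hn : (n : ℤ) = sigma0 L - ram L) {s : Finset ℚ}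
    (hs : maxLevel L ∈ s) : gSeg L s ∣ n :=
  gcd_sub_ram_eq_gSeg hn hs ▸ Nat.gcd_dvd_left _ _

theorem lcm_den_image_ram_div_mul {n : ℕ} (hn : (n : ℤ) = sigma0 L - ram L) (hn0 : n ≠ 0)
    {s : Finset ℚ} (hs : s ⊆ L) (hs₀ : maxLevel L ∈ s) :
    (s.image fun x => (ram L / n : ℚ) * x).lcm Rat.den = n / gSeg L s := by
  rw [Finset.lcm_image, ← gcd_sub_ram_eq_gSeg hn hs₀, ← lcm_den_mul_ram_div hs hn0]
  congr 1
  funext x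
  simp only [Function.comp_apply, div_mul_eq_mul_div, mul_comm (ram L : ℚ)]

theorem segLcm_rescale_ram_div {n : ℕ} (hn : (n : ℤ) = sigma0 L - ram L) (hn0 : n ≠ 0)
    {k : ℚ} (hk : k ∈ L) :
    segLcm (rescale L (ram L / n)) (ram L / n * k) = n / gSeg L (L.filter fun x => k ≤ x) := by
  have hc : (0 : ℚ) < ram L / n := by
    have := Nat.pos_of_ne_zero (ram_ne_zero (L := L))
    have := Nat.pos_of_ne_zero hn0
    positivity
  rw [segLcm_rescale_mul hc]
  exact lcm_den_image_ram_div_mul hn hn0 (Finset.filter_subset _ _)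
    (Finset.mem_filter.2 ⟨maxLevel_mem ⟨k, hk⟩, le_maxLevel hk⟩)

theorem ram_rescale_ram_div {n : ℕ} (hn : (n : ℤ) = sigma0 L - ram L) (hn0 : n ≠ 0)
    (hne : L.Nonempty) : ram (rescale L (ram L / n)) = n := by
  rw [ram_rescale, lcm_den_image_ram_div_mul hn hn0 (subset_refl L) (maxLevel_mem hne),
    gSeg_self, Nat.div_one]

theorem IsLevelDatum.gSeg_filter_le_ne (hL : IsLevelDatum L) {k k' : ℚ} (hk : k ∈ L)
    (hk' : k' ∈ L) (hlt : k' < k) :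
    gSeg L (L.filter fun x => k' ≤ x) ≠ gSeg L (L.filter fun x => k ≤ x) := by
  intro h
  have := hL.2.2 k hk k' hk' hlt
  rw [segLcm_eq_ram_div_gSeg, segLcm_eq_ram_div_gSeg, h] at this
  exact lt_irrefl _ this

theorem ram_div_pos {n : ℕ} (hn0 : n ≠ 0) : (0 : ℚ) < ram L / n := by
  have := Nat.pos_of_ne_zero (ram_ne_zero (L := L))
  have := Nat.pos_of_ne_zero hn0
  positivity

theorem IsLevelDatum.den_ram_div_mul_ne_one (hL : IsLevelDatum L) {n : ℕ}
    (hn : (n : ℤ) = sigma0 L - ram L) (hn0 : n ≠ 0) {k : ℚ} (hk : k ∈ L)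
    (hlt : k < maxLevel L) : (ram L / n * k).den ≠ 1 := by
  intro hint
  have hdvd : (n : ℤ) ∣ numer L k := by
    rw [← Rat.den_div_intCast_eq_one_iff _ _ (by exact_mod_cast hn0), numer_cast hk, ← hint]
    push_cast
    ring_nf
  set T := L.filter fun x => k < x
  have hT₀ : maxLevel L ∈ T := Finset.mem_filter.2 ⟨maxLevel_mem ⟨k, hk⟩, hlt⟩
  set k' := T.min' ⟨_, hT₀⟩
  obtain ⟨hk'L, hkk'⟩ := Finset.mem_filter.1 (T.min'_mem ⟨_, hT₀⟩)
  have hT : L.filter (fun x => k' ≤ x) = T := by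
    ext x
    simp only [T, Finset.mem_filter]
    constructor
    · rintro ⟨hx, h⟩
      exact ⟨hx, hkk'.trans_le h⟩
    · rintro ⟨hx, h⟩
      exact ⟨hx, T.min'_le x (Finset.mem_filter.2 ⟨hx, h⟩)⟩
  have hins : L.filter (fun x => k ≤ x) = insert k T := by
    ext x
    simp only [T, Finset.mem_filter, Finset.mem_insert, le_iff_eq_or_lt]
    constructor
    · rintro ⟨hx, rfl | h⟩
      exacts [Or.inl rfl, Or.inr ⟨hx, h⟩]
    · rintro (rfl | ⟨hx, h⟩)
      exacts [⟨hk, Or.inl rfl⟩, ⟨hx, Or.inr h⟩]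
  have hgT : gSeg L T ∣ (numer L k).natAbs :=
    (gSeg_dvd_of_maxLevel_mem hn hT₀).trans (Int.ofNat_dvd_left.1 hdvd)
  apply hL.gSeg_filter_le_ne hk'L hk hkk'
  rw [hT, hins, gSeg_insert_of_dvd hgT]

theorem IsLevelDatum.rescale_ram_div (hL : IsLevelDatum L) {n : ℕ}
    (hn : (n : ℤ) = sigma0 L - ram L) (hn0 : n ≠ 0) :
    IsLevelDatum (rescale L (ram L / n)) := by
  have hc := ram_div_pos (L := L) hn0
  refine ⟨?_, fun y hy => two_le_segLcm hy (Finset.mem_filter.1 hy).2, ?_⟩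
  · intro y hy
    obtain ⟨k, hk, rfl⟩ := Finset.mem_image.1 (Finset.mem_filter.1 hy).1
    exact mul_pos hc (hL.1 k hk)
  · intro y hy y' hy' hlt
    obtain ⟨k, hk, rfl⟩ := Finset.mem_image.1 (Finset.mem_filter.1 hy).1
    obtain ⟨k', hk', rfl⟩ := Finset.mem_image.1 (Finset.mem_filter.1 hy').1
    have hk'k : k' < k := (mul_lt_mul_iff_right₀ hc).1 hlt
    have hdvd : gSeg L (L.filter fun x => k' ≤ x) ∣ gSeg L (L.filter fun x => k ≤ x) :=
      gSeg_dvd_gSeg (Finset.monotone_filter_right L fun x _ h => hk'k.le.trans h)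
    have hdvdn : gSeg L (L.filter fun x => k ≤ x) ∣ n :=
      gSeg_dvd_of_maxLevel_mem hn (mem_filter.2 ⟨maxLevel_mem ⟨k, hk⟩, le_maxLevel hk⟩)
    have hpos : 0 < gSeg L (L.filter fun x => k ≤ x) :=
      Nat.gcd_pos_of_pos_left _ (Nat.pos_of_ne_zero ram_ne_zero)
    rw [segLcm_rescale_ram_div hn hn0 hk, segLcm_rescale_ram_div hn hn0 hk',
      Nat.div_lt_div_left hn0 hdvdn (hdvd.trans hdvdn)]
    exact lt_of_le_of_ne (Nat.le_of_dvd hpos hdvd) (hL.gSeg_filter_le_ne hk hk' hk'k)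

end LevelDatum

/-- if the largest level `k₀` of a nonempty level datum `L` satisfies
`1 < k₀ < 2`, with `ρ = Ram(L)`, `σ = k₀·ρ ∈ ℤ`, then (a) no level other than the largest
becomes an integer after rescaling by `ρ/(σ−ρ)`; (b) the rescaled set with integer
elements removed is again a level datum; (c) its ramification order is `σ − ρ < ρ`. -/
theorem stmt_7 (L : Finset ℚ) (hL : IsLevelDatum L) (hne : L.Nonempty)
    (h1 : 1 < maxLevel L) (h2 : maxLevel L < 2) :
    (∀ k ∈ L, k ≠ maxLevel L →
      ((ram L : ℚ) / ((sigma0 L : ℚ) - (ram L : ℚ)) * k).den ≠ 1) ∧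
    IsLevelDatum (rescale L ((ram L : ℚ) / ((sigma0 L : ℚ) - (ram L : ℚ)))) ∧
    ((ram (rescale L ((ram L : ℚ) / ((sigma0 L : ℚ) - (ram L : ℚ)))) : ℤ)
        = sigma0 L - (ram L : ℤ) ∧
      ram (rescale L ((ram L : ℚ) / ((sigma0 L : ℚ) - (ram L : ℚ)))) < ram L) := by
  have hρ : (0 : ℚ) < ram L := by exact_mod_cast Nat.pos_of_ne_zero ram_ne_zero
  have hσ : (ram L : ℤ) < sigma0 L ∧ sigma0 L < 2 * ram L := by
    have hσQ := sigma0_cast hne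
    constructor
    · exact_mod_cast (by nlinarith : (ram L : ℚ) < sigma0 L)
    · exact_mod_cast (by nlinarith : (sigma0 L : ℚ) < 2 * ram L)
  obtain ⟨n, hn⟩ := Int.eq_ofNat_of_zero_le (sub_nonneg.2 hσ.1.le)
  have hn0 : n ≠ 0 := by omega
  have hnQ : (sigma0 L : ℚ) - ram L = n := by exact_mod_cast hn
  rw [hnQ, ram_rescale_ram_div hn.symm hn0 hne, ← hn]
  refine ⟨fun k hk hk₀ => hL.den_ram_div_mul_ne_one hn.symm hn0 hk
    (lt_of_le_of_ne (le_maxLevel hk) hk₀), hL.rescale_ram_div hn.symm hn0, rfl, by omega⟩
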